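/- arXiv:2509.20326 — 5 statements merged into one kernel-verified Lean document; each statement's English description precedes it below -/
import Mathlib

section
/- Let F : [0,∞] → [0,∞] be left-continuous and non-decreasing, and set s = sup{t ∈ [0,∞] : F(t) < F(∞)}. If s > 0, then for every ε > 0 there exists a strictly increasing sequence t₀ < t₁ < t₂ < … of elements of [0,s) with t₀ = 0, lim_{i→∞} tᵢ = s, and such that for every i ≥ 1 and all t ∈ (t_{i-1}, tᵢ], we have |F(tᵢ) − F(t)| ≤ ε. -/
open MeasureTheory Metric ENNReal Set Filter Topology
noncomputable section

/-!
Write `L x = ⨅ u > x, F u` for the right limit of `F` at `x` and let `c x` be the supremum of the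
points `v > x` with `F v ≤ L x + ε`. By monotonicity and left continuity, `F ≤ L x + ε` on all of
`(x, c x]`, while `L y ≥ L x + ε` once `y ≥ c x`. The staircase steps from `tᵢ` to `c tᵢ` unless that
would overshoot `s`, in which case it steps past the `i`-th term of a sequence tending to `s`.
If the steps accumulated below `s`, then eventually every step would be a full step to `c tᵢ`, so
`L tᵢ` would grow by `ε` at each step while staying below a finite value `F u`, `u < s`.
-/

namespace Staircase

theorem exists_next_step {α : Type*} [LinearOrder α] [DenselyOrdered α] {x c s a : α} (hxc : x < c)
    (hxs : x < s) (has : a < s) : ∃ y, x < y ∧ y < s ∧ y ≤ c ∧ (a ≤ y ∨ c ≤ y) := by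
  by_cases hcs : c < s
  · exact ⟨c, hxc, hcs, le_rfl, Or.inr le_rfl⟩
  · obtain ⟨y, hy, hys⟩ := exists_between (max_lt hxs has)
    exact ⟨y, (le_max_left x a).trans_lt hy, hys, hys.le.trans (not_lt.1 hcs),
      Or.inl ((le_max_right x a).trans hy.le)⟩

variable {α : Type*} [CompleteLinearOrder α]

def rightInf (F : α → ℝ≥0∞) (x : α) : ℝ≥0∞ := ⨅ u ∈ Ioi x, F u

def cap (F : α → ℝ≥0∞) (ε : ℝ≥0∞) (x : α) : α := sSup {v | x < v ∧ F v ≤ rightInf F x + ε}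

variable {F : α → ℝ≥0∞} {ε : ℝ≥0∞} {x y u v : α}

theorem rightInf_le (h : x < u) : rightInf F x ≤ F u := biInf_le F h

theorem lt_cap (hx : x < ⊤) (hε : ε ≠ 0) : x < cap F ε x := by
  suffices ∃ v, x < v ∧ F v ≤ rightInf F x + ε by
    obtain ⟨v, hxv, hv⟩ := this
    exact hxv.trans_le (le_sSup ⟨hxv, hv⟩)
  rcases eq_or_ne (rightInf F x) ⊤ with h | h
  · exact ⟨⊤, hx, by simp [h]⟩
  · have : (⨅ u ∈ Ioi x, F u) < rightInf F x + ε := ENNReal.lt_add_right h hε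
    simp only [iInf_lt_iff] at this
    obtain ⟨v, hxv, hv⟩ := this
    exact ⟨v, hxv, hv.le⟩

theorem apply_le_of_lt_cap (hF : Monotone F) (hv : v < cap F ε x) :
    F v ≤ rightInf F x + ε := by
  obtain ⟨w, ⟨-, hw⟩, hvw⟩ := lt_sSup_iff.1 hv
  exact (hF hvw.le).trans hw

theorem apply_le_of_le_cap [TopologicalSpace α] [OrderTopology α] [DenselyOrdered α]
    (hF : Monotone F) (hleft : ContinuousWithinAt F (Iio (cap F ε x)) (cap F ε x))
    (hxv : x < v) (hv : v ≤ cap F ε x) : F v ≤ rightInf F x + ε := by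
  rcases hv.lt_or_eq with hv | rfl
  · exact apply_le_of_lt_cap hF hv
  · have : (𝓝[<] (cap F ε x)).NeBot := nhdsLT_neBot_of_exists_lt ⟨x, hxv⟩
    refine le_of_tendsto hleft ?_
    filter_upwards [Ioo_mem_nhdsLT_of_mem ⟨hxv, le_rfl⟩] with w hw
    exact apply_le_of_lt_cap hF hw.2

theorem rightInf_add_le_of_cap_le (hxy : x ≤ y) (hy : cap F ε x ≤ y) :
    rightInf F x + ε ≤ rightInf F y := by
  refine le_iInf₂ fun u hyu => ?_
  by_contra! hu
  exact (hy.trans_lt hyu).not_ge (le_sSup ⟨hxy.trans_lt hyu, hu.le⟩)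

theorem apply_eq_top_of_rightInf_add_le (hε : ε ≠ 0) {t : ℕ → α}
    (hjump : ∀ n, rightInf F (t n) + ε ≤ rightInf F (t (n + 1))) (hu : ∀ n, t n < u) :
    F u = ⊤ := by
  have hgrow : ∀ n : ℕ, n * ε ≤ rightInf F (t n) := by
    intro n
    induction n with
    | zero => simp
    | succ n ih =>
      calc ((n + 1 : ℕ) : ℝ≥0∞) * ε = n * ε + ε := by push_cast; ring
        _ ≤ rightInf F (t n) + ε := by gcongr
        _ ≤ rightInf F (t (n + 1)) := hjump n
  by_contra hFu
  obtain ⟨n, hn⟩ := ENNReal.exists_nat_mul_gt hε hFu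
  exact hn.not_ge ((hgrow n).trans (rightInf_le (hu n)))

end Staircase

open Staircase in
theorem exists_staircase {α : Type*} [CompleteLinearOrder α] [TopologicalSpace α]
    [OrderTopology α] [DenselyOrdered α] [FirstCountableTopology α] {F : α → ℝ≥0∞}
    (hF : Monotone F) (hleft : ∀ t : α, ContinuousWithinAt F (Iio t) t) {s : α} (hs : ⊥ < s)
    (hfin : ∀ u < s, F u ≠ ⊤) {ε : ℝ≥0∞} (hε : ε ≠ 0) :
    ∃ t : ℕ → α, StrictMono t ∧ t 0 = ⊥ ∧ (∀ i, t i < s) ∧ Tendsto t atTop (𝓝 s) ∧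
      ∀ i u, t i < u → u ≤ t (i + 1) → F (t (i + 1)) ≤ F u + ε ∧ F u ≤ F (t (i + 1)) + ε := by
  obtain ⟨a, -, ha, ha_lim⟩ := exists_seq_strictMono_tendsto' hs
  choose! next hnext_gt hnext_lt hnext_le hnext_far using fun n x (hx : x < s) =>
    exists_next_step (lt_cap (hx.trans_le le_top) hε (F := F)) hx (ha n).2
  let t : ℕ → α := fun n => Nat.rec ⊥ (fun n x => next (n + 1) x) n
  have ht_lt : ∀ n, t n < s := by
    intro n
    induction n with
    | zero => exact hs
    | succ n ih => exact hnext_lt _ _ ih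
  have ht_succ : ∀ n, t n < t (n + 1) := fun n => hnext_gt _ _ (ht_lt n)
  have ht_cap : ∀ n, t (n + 1) ≤ cap F ε (t n) := fun n => hnext_le _ _ (ht_lt n)
  have hsup : ⨆ n, t n = s := by
    refine le_antisymm (iSup_le fun n => (ht_lt n).le) (not_lt.1 fun hT => ?_)
    obtain ⟨u, hTu, hus⟩ := exists_between hT
    obtain ⟨N, hN⟩ := eventually_atTop.1 (ha_lim.eventually (eventually_gt_nhds hT))
    refine hfin u hus (apply_eq_top_of_rightInf_add_le hε (t := fun k => t (N + k))
      (fun k => ?_) fun k => (le_iSup t _).trans_lt hTu)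
    refine rightInf_add_le_of_cap_le (ht_succ _).le ?_
    rcases hnext_far (N + k + 1) (t (N + k)) (ht_lt _) with h | h
    · exact absurd (h.trans (le_iSup t (N + k + 1))) (hN _ (by omega)).not_ge
    · exact h
  have ht_mono : StrictMono t := strictMono_nat_of_lt_succ ht_succ
  refine ⟨t, ht_mono, rfl, ht_lt, hsup ▸ tendsto_atTop_iSup ht_mono.monotone,
    fun i u hiu hui => ⟨?_, (hF hui).trans le_self_add⟩⟩
  calc F (t (i + 1)) ≤ rightInf F (t i) + ε :=
        apply_le_of_le_cap hF (hleft _) (ht_succ i) (ht_cap i)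
    _ ≤ F u + ε := by gcongr; exact rightInf_le hiu

/-- Staircase Lemma: a left-continuous non-decreasing `F : [0,∞] → [0,∞]` admits,
for every `ε > 0`, a strictly increasing staircase sequence `t₀ = 0 < t₁ < t₂ < …` in `[0, s)`
tending to `s = sup {t : F t < F ∞}`, with `|F (tᵢ) − F t| ≤ ε` for `t ∈ (t_{i-1}, tᵢ]`. -/
theorem stmt_0 (F : ℝ≥0∞ → ℝ≥0∞)
    (hmono : Monotone F)
    (hleft : ∀ t : ℝ≥0∞, ContinuousWithinAt F (Set.Iio t) t)
    (s : ℝ≥0∞) (hs : s = sSup {t : ℝ≥0∞ | F t < F ⊤})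
    (hspos : 0 < s) (ε : ℝ≥0∞) (hε : 0 < ε) :
    ∃ t : ℕ → ℝ≥0∞, StrictMono t ∧ t 0 = 0 ∧ (∀ i, t i < s) ∧
      Filter.Tendsto t Filter.atTop (nhds s) ∧
      ∀ i : ℕ, ∀ u : ℝ≥0∞, t i < u → u ≤ t (i + 1) →
        F (t (i + 1)) ≤ F u + ε ∧ F u ≤ F (t (i + 1)) + ε := by
  have hfin : ∀ u < s, F u ≠ ⊤ := by
    intro u hu
    obtain ⟨v, hv, huv⟩ := lt_sSup_iff.1 (hs ▸ hu)
    exact ((hmono huv.le).trans_lt hv).ne_top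
  exact exists_staircase hmono hleft hspos hfin hε.ne'
end
end

section
/- Let Ω ⊂ ℝⁿ be open and bounded, φ : Ω → [0,∞] measurable, and γ ∈ (0,1). Then ∫_Ω (μφ⁺(φ(x)))^{−γ} dmₙ(x) ≤ (1−γ)^{−1} [mₙ(Ω)]^{1−γ}, where μφ⁺(t) = mₙ({x ∈ Ω : φ(x) ≥ t}). -/
/-!
Write `ψ(x) = μφ⁺(φ(x))` and `V = mₙ(Ω)`. The whole argument rests on the distribution bound
`mₙ{x ∈ Ω : ψ(x) < u} ≤ u`: the set in question is an upper set for `φ`, hence an increasing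
countable union of superlevel sets `{φ ≥ φ(xₖ)}` with each `ψ(xₖ) < u` (or a single such set when
the infimum of `φ` on it is attained). So `ψ` is stochastically larger than the uniform
distribution on `[0, V]`, and by the layer-cake formula
`∫ ψ^{-γ} = ∫₀^∞ mₙ{ψ^{-γ} > t} dt ≤ ∫₀^∞ min(V, t^{-1/γ}) dt = V^{1-γ} / (1-γ)`.
-/

open MeasureTheory ENNReal Set
noncomputable section

theorem ENNReal.lt_rpow_neg_iff {a x : ℝ≥0∞} {γ : ℝ} (hγ : 0 < γ) :
    a < x ^ (-γ) ↔ x < a ^ (-γ⁻¹) := by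
  rw [rpow_neg, rpow_neg, lt_inv_iff_lt_inv, ← inv_rpow, ← lt_rpow_inv_iff hγ]

theorem Real.volume_Ioi_zero_inter_ofReal_lt (a : ℝ≥0∞) :
    volume (Ioi 0 ∩ {t : ℝ | ENNReal.ofReal t < a}) = a := by
  rcases eq_or_ne a ⊤ with rfl | ha
  · simp
  have hIoo : Ioi 0 ∩ {t : ℝ | ENNReal.ofReal t < a} = Ioo 0 a.toReal := by
    ext t
    simp only [mem_inter_iff, mem_Ioi, mem_ofPred_eq, mem_Ioo, and_congr_right_iff]
    exact fun ht => ofReal_lt_iff_lt_toReal ht.le ha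
  rw [hIoo, Real.volume_Ioo, sub_zero, ofReal_toReal ha]

theorem lintegral_Ioi_ofReal_rpow {a c : ℝ} (ha : a < -1) (hc : 0 < c) :
    ∫⁻ t in Ioi c, ENNReal.ofReal (t ^ a) = ENNReal.ofReal (-c ^ (a + 1) / (a + 1)) := by
  rw [← integral_Ioi_rpow_of_lt ha hc,
    ofReal_integral_eq_lintegral_ofReal (integrableOn_Ioi_rpow_of_lt ha hc)]
  filter_upwards [ae_restrict_mem measurableSet_Ioi] with t ht
  exact Real.rpow_nonneg (hc.trans ht).le _

theorem lintegral_Ioi_min_rpow_neg_inv_le {γ : ℝ} (hγ0 : 0 < γ) (hγ1 : γ < 1) (V : ℝ≥0∞) :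
    ∫⁻ t in Ioi (0 : ℝ), min V (ENNReal.ofReal t ^ (-γ⁻¹)) ≤
      ENNReal.ofReal (1 / (1 - γ)) * V ^ (1 - γ) := by
  have h1γ : 0 < 1 - γ := by linarith
  rcases eq_or_ne V ⊤ with rfl | hV
  · rw [top_rpow_of_pos h1γ, mul_top (by simpa using h1γ)]
    exact le_top
  rcases eq_or_ne V 0 with rfl | hV0
  · simp
  obtain ⟨v, hv, rfl⟩ : ∃ v : ℝ, 0 < v ∧ ENNReal.ofReal v = V :=
    ⟨V.toReal, toReal_pos hV0 hV, ofReal_toReal hV⟩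
  -- the two terms of the minimum cross at `T`
  set T := v ^ (-γ) with hT
  have hT0 : 0 < T := Real.rpow_pos_of_pos hv _
  have hp : -γ⁻¹ < -1 := neg_lt_neg_iff.2 ((one_lt_inv₀ hγ0).2 hγ1)
  have head : ∫⁻ t in Ioc 0 T, min (ENNReal.ofReal v) (ENNReal.ofReal t ^ (-γ⁻¹)) ≤
      ENNReal.ofReal (v ^ (1 - γ)) :=
    calc _ ≤ ∫⁻ _ in Ioc 0 T, ENNReal.ofReal v := lintegral_mono fun _ => min_le_left _ _
      _ = ENNReal.ofReal (v ^ (1 - γ)) := by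
        rw [setLIntegral_const, Real.volume_Ioc, sub_zero, ← ofReal_mul hv.le, hT,
          ← Real.rpow_one_add' hv.le (by linarith), sub_eq_add_neg]
  have tail : ∫⁻ t in Ioi T, min (ENNReal.ofReal v) (ENNReal.ofReal t ^ (-γ⁻¹)) ≤
      ENNReal.ofReal (v ^ (1 - γ) * (γ / (1 - γ))) :=
    calc _ ≤ ∫⁻ t in Ioi T, ENNReal.ofReal (t ^ (-γ⁻¹)) := by
          refine setLIntegral_mono' measurableSet_Ioi fun t ht => ?_
          rw [← ofReal_rpow_of_pos (hT0.trans ht)]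
          exact min_le_right _ _
      _ = ENNReal.ofReal (v ^ (1 - γ) * (γ / (1 - γ))) := by
        have hexp : -γ * (-γ⁻¹ + 1) = 1 - γ := by field_simp; ring
        have hden : -γ⁻¹ + 1 = -((1 - γ) / γ) := by field_simp; ring
        rw [lintegral_Ioi_ofReal_rpow hp hT0, hT, ← Real.rpow_mul hv.le, hexp, hden,
          neg_div_neg_eq, div_div_eq_mul_div, mul_div_assoc]
  calc _ = ∫⁻ t in Ioc 0 T ∪ Ioi T, min (ENNReal.ofReal v) (ENNReal.ofReal t ^ (-γ⁻¹)) := by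
        rw [Ioc_union_Ioi_eq_Ioi hT0.le]
    _ ≤ ENNReal.ofReal (v ^ (1 - γ)) + ENNReal.ofReal (v ^ (1 - γ) * (γ / (1 - γ))) :=
        (lintegral_union_le _ _ _).trans (add_le_add head tail)
    _ = _ := by
      rw [← ofReal_add (by positivity) (by positivity), ofReal_rpow_of_pos hv,
        ← ofReal_mul (by positivity)]
      congr 1
      field_simp
      ring

section UpperDistribution

variable {α : Type*} [MeasurableSpace α]

theorem lintegral_eq_lintegral_meas_ofReal_lt (μ : Measure α) [SFinite μ] {f : α → ℝ≥0∞}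
    (hf : Measurable f) :
    ∫⁻ x, f x ∂μ = ∫⁻ t in Ioi 0, μ {x | ENNReal.ofReal t < f x} := by
  have hS : MeasurableSet {p : α × ℝ | ENNReal.ofReal p.2 < f p.1} :=
    measurableSet_lt (ENNReal.measurable_ofReal.comp measurable_snd) (hf.comp measurable_fst)
  calc ∫⁻ x, f x ∂μ = (μ.prod (volume.restrict (Ioi 0))) {p | ENNReal.ofReal p.2 < f p.1} := by
        rw [Measure.prod_apply hS]
        refine lintegral_congr fun x => ?_
        rw [Measure.restrict_apply' measurableSet_Ioi, inter_comm]
        exact (Real.volume_Ioi_zero_inter_ofReal_lt (f x)).symm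
    _ = _ := Measure.prod_apply_symm hS

/-- The paper's `μφ⁺`. -/
def upperDistribution {β : Type*} [LE β] (μ : Measure α) (φ : α → β) (t : β) : ℝ≥0∞ :=
  μ {z | t ≤ φ z}

theorem upperDistribution_antitone {β : Type*} [Preorder β] (μ : Measure α) (φ : α → β) :
    Antitone (upperDistribution μ φ) :=
  fun _ _ hst => measure_mono fun _ hz => hst.trans hz

theorem measure_upperDistribution_comp_lt_le {β : Type*} [CompleteLinearOrder β]
    [TopologicalSpace β] [OrderTopology β] [FirstCountableTopology β] (μ : Measure α)
    (φ : α → β) (u : ℝ≥0∞) :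
    μ {x | upperDistribution μ φ (φ x) < u} ≤ u := by
  set A := {x | upperDistribution μ φ (φ x) < u}
  rcases A.eq_empty_or_nonempty with hA | hA
  · simp [hA]
  by_cases hmin : sInf (φ '' A) ∈ φ '' A
  · obtain ⟨x₀, hx₀, hx₀_eq⟩ := hmin
    calc μ A ≤ upperDistribution μ φ (φ x₀) :=
          measure_mono fun x hx => hx₀_eq ▸ sInf_le (mem_image_of_mem φ hx)
      _ ≤ u := hx₀.le
  obtain ⟨t, ht_anti, ht_lim, ht_mem⟩ :=
    exists_seq_tendsto_sInf (hA.image φ) (OrderBot.bddBelow _)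
  have hA_sub : A ⊆ ⋃ k, {z | t k ≤ φ z} := by
    intro x hx
    have hlt : sInf (φ '' A) < φ x := (sInf_le (mem_image_of_mem φ hx)).lt_of_ne
      fun h => hmin (h ▸ mem_image_of_mem φ hx)
    obtain ⟨k, hk⟩ := (ht_lim.eventually_lt_const hlt).exists
    exact mem_iUnion.2 ⟨k, hk.le⟩
  have hmono : Monotone fun k => {z | t k ≤ φ z} := fun i j hij z hz => (ht_anti hij).trans hz
  calc μ A ≤ μ (⋃ k, {z | t k ≤ φ z}) := measure_mono hA_sub
    _ = ⨆ k, upperDistribution μ φ (t k) := hmono.measure_iUnion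
    _ ≤ u := iSup_le fun k => by obtain ⟨x, hx, hxk⟩ := ht_mem k; exact hxk ▸ hx.le

theorem lintegral_upperDistribution_comp_rpow_neg_le (ν : Measure α) [SFinite ν]
    {φ : α → ℝ≥0∞} (hφ : Measurable φ) {γ : ℝ} (hγ0 : 0 < γ) (hγ1 : γ < 1) :
    ∫⁻ x, upperDistribution ν φ (φ x) ^ (-γ) ∂ν ≤
      ENNReal.ofReal (1 / (1 - γ)) * ν univ ^ (1 - γ) := by
  have hmeas : Measurable fun x => upperDistribution ν φ (φ x) ^ (-γ) :=
    ((upperDistribution_antitone ν φ).measurable.comp hφ).pow_const _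
  calc _ = ∫⁻ t in Ioi 0, ν {x | ENNReal.ofReal t < upperDistribution ν φ (φ x) ^ (-γ)} :=
        lintegral_eq_lintegral_meas_ofReal_lt ν hmeas
    _ ≤ ∫⁻ t in Ioi 0, min (ν univ) (ENNReal.ofReal t ^ (-γ⁻¹)) := by
        refine lintegral_mono fun t => le_min (measure_mono (subset_univ _)) ?_
        calc _ ≤ ν {x | upperDistribution ν φ (φ x) < ENNReal.ofReal t ^ (-γ⁻¹)} :=
              measure_mono fun x hx => (lt_rpow_neg_iff hγ0).1 hx
          _ ≤ _ := measure_upperDistribution_comp_lt_le ν φ _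
    _ ≤ _ := lintegral_Ioi_min_rpow_neg_inv_le hγ0 hγ1 _

end UpperDistribution

theorem stmt_4_general (n : ℕ) (Ω : Set (EuclideanSpace ℝ (Fin n)))
    (φ : EuclideanSpace ℝ (Fin n) → ℝ≥0∞) (hφ : Measurable φ)
    (γ : ℝ) (hγ0 : 0 < γ) (hγ1 : γ < 1) :
    ∫⁻ x in Ω, (volume {z ∈ Ω | φ x ≤ φ z}) ^ (-γ) ∂volume ≤
      ENNReal.ofReal (1 / (1 - γ)) * (volume Ω) ^ (1 - γ) := by
  have hdistrib : ∀ x, volume {z ∈ Ω | φ x ≤ φ z} =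
      upperDistribution (volume.restrict Ω) φ (φ x) := fun x => by
    rw [upperDistribution, Measure.restrict_apply (measurableSet_le measurable_const hφ),
      inter_comm]
    rfl
  simpa only [hdistrib, Measure.restrict_apply_univ] using
    lintegral_upperDistribution_comp_rpow_neg_le (volume.restrict Ω) hφ hγ0 hγ1

/-- For `γ ∈ (0,1)`:  `∫_Ω (μφ⁺ ∘ φ)^{−γ} ≤ (1−γ)⁻¹ mₙ(Ω)^{1−γ}`,
where `μφ⁺(t) = mₙ({x ∈ Ω : φ(x) ≥ t})` and `0^{−γ} = ∞`. -/
theorem stmt_4 (n : ℕ) (Ω : Set (EuclideanSpace ℝ (Fin n)))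
    (hΩo : IsOpen Ω) (hΩb : Bornology.IsBounded Ω)
    (φ : EuclideanSpace ℝ (Fin n) → ℝ≥0∞) (hφ : Measurable φ)
    (γ : ℝ) (hγ0 : 0 < γ) (hγ1 : γ < 1) :
    ∫⁻ x in Ω, (volume {z ∈ Ω | φ x ≤ φ z}) ^ (-γ) ∂volume ≤
      ENNReal.ofReal (1 / (1 - γ)) * (volume Ω) ^ (1 - γ) :=
  stmt_4_general n Ω φ hφ γ hγ0 hγ1
end
end

section
/- Let Ω ⊂ ℝⁿ be open and bounded, φ : Ω → [0,∞] measurable, and γ ∈ (0,1). Then ∫_Ω (μφ⁻(φ(x)))^{−γ} dmₙ(x) ≥ (1−γ)^{−1} [mₙ(Ω)]^{1−γ}, where μφ⁻(t) = mₙ({x ∈ Ω : φ(x) > t}). -/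
/-!
Write `f x = ν {z | φ x < φ z}` and `V = ν univ`. The values of `f` are stochastically smaller
than a uniform variable on `(0, V]`: `ν {f < a} ≥ min a V` for every level `a`. By the layer-cake
formula every antitone function of `f` therefore integrates to at least its integral against the
uniform law, and for `s ↦ s ^ (-γ)` the latter is `∫₀^V s ^ (-γ) ds = V ^ (1 - γ) / (1 - γ)`.
-/

open MeasureTheory ENNReal Set Filter Topology

lemma ENNReal.antitone_rpow_neg {γ : ℝ} (hγ : 0 ≤ γ) : Antitone fun x : ℝ≥0∞ => x ^ (-γ) :=
  fun x y hxy => by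
    simp only [ENNReal.rpow_neg]
    exact ENNReal.inv_le_inv.2 (ENNReal.rpow_le_rpow hxy hγ)

lemma volume_restrict_Ioi_setOf_ofReal_le (c : ℝ≥0∞) :
    volume.restrict (Ioi (0 : ℝ)) {t | ENNReal.ofReal t ≤ c} = c := by
  rcases eq_or_ne c ∞ with rfl | hc
  · simp
  · have : {t | ENNReal.ofReal t ≤ c} ∩ Ioi 0 = Ioc 0 c.toReal := by
      ext t
      simp only [mem_inter_iff, mem_ofPred_eq, mem_Ioi, mem_Ioc]
      exact ⟨fun h => ⟨h.2, (ENNReal.ofReal_le_iff_le_toReal hc).1 h.1⟩,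
        fun h => ⟨(ENNReal.ofReal_le_iff_le_toReal hc).2 h.2, h.1⟩⟩
    rw [Measure.restrict_apply (measurableSet_le measurable_ofReal measurable_const), this,
      Real.volume_Ioc, sub_zero, ENNReal.ofReal_toReal hc]

lemma lintegral_Ioc_ofReal_rpow_neg {γ : ℝ} (hγ : γ < 1) {b : ℝ} (hb : 0 ≤ b) :
    ∫⁻ s in Ioc 0 b, ENNReal.ofReal s ^ (-γ) = ENNReal.ofReal (b ^ (1 - γ) / (1 - γ)) := by
  have hint : IntegrableOn (fun s : ℝ => s ^ (-γ)) (Ioc 0 b) :=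
    (intervalIntegral.intervalIntegrable_rpow' (by linarith)).1
  rw [setLIntegral_congr_fun measurableSet_Ioc fun s hs => ENNReal.ofReal_rpow_of_pos hs.1,
    ← ofReal_integral_eq_lintegral_ofReal hint
      ((ae_restrict_iff' measurableSet_Ioc).2 (ae_of_all _ fun s hs => Real.rpow_nonneg hs.1.le _)),
    ← intervalIntegral.integral_of_le hb, integral_rpow (Or.inl (by linarith)),
    Real.zero_rpow (by linarith), sub_zero, neg_add_eq_sub]

section LevelSets

variable {α : Type*} [MeasurableSpace α]

theorem lintegral_eq_lintegral_meas_ofReal_le (μ : Measure α) [SFinite μ] {g : α → ℝ≥0∞}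
    (hg : Measurable g) : ∫⁻ x, g x ∂μ = ∫⁻ t in Ioi 0, μ {x | ENNReal.ofReal t ≤ g x} := by
  have hE : MeasurableSet {p : α × ℝ | ENNReal.ofReal p.2 ≤ g p.1} :=
    measurableSet_le (measurable_ofReal.comp measurable_snd) (hg.comp measurable_fst)
  calc ∫⁻ x, g x ∂μ
      = ∫⁻ x, volume.restrict (Ioi (0 : ℝ)) {t | ENNReal.ofReal t ≤ g x} ∂μ := by
        simp only [volume_restrict_Ioi_setOf_ofReal_le]
    _ = ∫⁻ t in Ioi 0, μ {x | ENNReal.ofReal t ≤ g x} :=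
        (Measure.prod_apply hE).symm.trans (Measure.prod_apply_symm hE)

theorem lintegral_Ioc_le_lintegral_comp_of_antitone (ν : Measure α) [SFinite ν] {f : α → ℝ≥0∞}
    (hf : Measurable f) (hf_dist : ∀ a, min a (ν univ) ≤ ν {x | f x < a})
    {h : ℝ≥0∞ → ℝ≥0∞} (hh : Antitone h) :
    ∫⁻ s in Ioc 0 (ν univ).toReal, h (ENNReal.ofReal s) ≤ ∫⁻ x, h (f x) ∂ν := by
  rw [lintegral_eq_lintegral_meas_ofReal_le _ (g := fun s => h (ENNReal.ofReal s))
      (hh.measurable.comp measurable_ofReal),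
    lintegral_eq_lintegral_meas_ofReal_le _ (g := fun x => h (f x)) (hh.measurable.comp hf)]
  refine lintegral_mono fun t => ?_
  -- `{u | ofReal t ≤ h u}` is a down-set, so both level sets are controlled by its supremum.
  set a := sSup {u | ENNReal.ofReal t ≤ h u}
  calc volume.restrict (Ioc 0 (ν univ).toReal) {s | ENNReal.ofReal t ≤ h (ENNReal.ofReal s)}
      ≤ min a (ν univ) := by
        refine le_min ?_ ?_
        · calc _ ≤ volume.restrict (Ioi 0) {s | ENNReal.ofReal s ≤ a} :=
                (Measure.restrict_mono Ioc_subset_Ioi_self le_rfl _).trans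
                  (measure_mono fun s hs => le_sSup (s := {u | ENNReal.ofReal t ≤ h u}) hs)
            _ = a := volume_restrict_Ioi_setOf_ofReal_le a
        · calc _ ≤ volume (Ioc 0 (ν univ).toReal) :=
                (measure_mono (subset_univ _)).trans_eq (Measure.restrict_apply_univ _)
            _ ≤ ν univ := by rw [Real.volume_Ioc, sub_zero]; exact ofReal_toReal_le
    _ ≤ ν {x | f x < a} := hf_dist a
    _ ≤ ν {x | ENNReal.ofReal t ≤ h (f x)} := measure_mono fun x (hx : f x < a) => by
        obtain ⟨u, hu, hxu⟩ := lt_sSup_iff.1 hx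
        exact hu.trans (hh hxu.le)

variable {β : Type*} [CompleteLinearOrder β] [TopologicalSpace β] [OrderTopology β]
  [FirstCountableTopology β] [MeasurableSpace β]

theorem min_le_measure_setOf_measure_lt [OpensMeasurableSpace β] (ν : Measure α)
    [IsFiniteMeasure ν] {φ : α → β} (hφ : Measurable φ) (T : ℝ≥0∞) :
    min T (ν univ) ≤ ν {x | ν {z | φ x < φ z} < T} := by
  set D := {s | T ≤ ν {z | s < φ z}}
  have hD : ∀ {s s'}, s' ∈ D → s ≤ s' → s ∈ D := fun hs' hss' =>
    hs'.trans (measure_mono fun z hz => lt_of_le_of_lt hss' hz)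
  have hE : {x | ν {z | φ x < φ z} < T} = φ ⁻¹' Dᶜ := by
    ext x; simp [D]
  rw [hE]
  rcases D.eq_empty_or_nonempty with hD₀ | hD₀
  · simp [hD₀]
  refine min_le_of_left_le ?_
  by_cases hsup : sSup D ∈ D
  · calc T ≤ ν {z | sSup D < φ z} := hsup
      _ ≤ ν (φ ⁻¹' Dᶜ) := measure_mono fun z hz hzD => (le_sSup hzD).not_gt hz
  -- Otherwise `φ ⁻¹' Dᶜ ⊇ ⋂ n, {u n < φ}` for `u n ∈ D` increasing to `sSup D`, and continuity
  -- from above gives this intersection mass `≥ T`.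
  · obtain ⟨u, hu_mono, hu_tend, hu_mem⟩ := exists_seq_tendsto_sSup hD₀ (OrderTop.bddAbove D)
    have hlim : Tendsto (fun n => ν {z | u n < φ z}) atTop (𝓝 (ν (⋂ n, {z | u n < φ z}))) :=
      tendsto_measure_iInter_atTop (fun n => (hφ measurableSet_Ioi).nullMeasurableSet)
        (fun m n hmn z hz => lt_of_le_of_lt (hu_mono hmn) hz) ⟨0, measure_ne_top _ _⟩
    calc T ≤ ν (⋂ n, {z | u n < φ z}) := ge_of_tendsto' hlim fun n => hu_mem n
      _ ≤ ν (φ ⁻¹' Dᶜ) := measure_mono fun z hz hzD => hsup <|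
          hD hzD (le_of_tendsto' hu_tend fun n => (mem_iInter.1 hz n).le)

theorem ofReal_mul_rpow_le_lintegral_measure_lt_rpow_neg [BorelSpace β] (ν : Measure α)
    [IsFiniteMeasure ν] {φ : α → β} (hφ : Measurable φ) {γ : ℝ} (hγ0 : 0 ≤ γ) (hγ1 : γ < 1) :
    ENNReal.ofReal (1 / (1 - γ)) * ν univ ^ (1 - γ) ≤ ∫⁻ x, ν {z | φ x < φ z} ^ (-γ) ∂ν := by
  have hf : Measurable fun x => ν {z | φ x < φ z} :=
    (Antitone.measurable (f := fun s => ν {z | s < φ z}) fun s s' hss' =>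
      measure_mono fun z hz => lt_of_le_of_lt hss' hz).comp hφ
  calc ENNReal.ofReal (1 / (1 - γ)) * ν univ ^ (1 - γ)
      = ENNReal.ofReal ((ν univ).toReal ^ (1 - γ) / (1 - γ)) := by
        rw [← ENNReal.ofReal_toReal (measure_ne_top ν univ),
          ENNReal.ofReal_rpow_of_nonneg ENNReal.toReal_nonneg (by linarith),
          ← ENNReal.ofReal_mul (one_div_nonneg.2 (by linarith)),
          ENNReal.toReal_ofReal ENNReal.toReal_nonneg, one_div_mul_eq_div]
    _ = ∫⁻ s in Ioc 0 (ν univ).toReal, ENNReal.ofReal s ^ (-γ) :=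
        (lintegral_Ioc_ofReal_rpow_neg hγ1 ENNReal.toReal_nonneg).symm
    _ ≤ ∫⁻ x, ν {z | φ x < φ z} ^ (-γ) ∂ν :=
        lintegral_Ioc_le_lintegral_comp_of_antitone ν hf
          (min_le_measure_setOf_measure_lt ν hφ) (ENNReal.antitone_rpow_neg hγ0)

end LevelSets

/-- For `γ ∈ (0,1)`:  `∫_Ω (μφ⁻ ∘ φ)^{−γ} ≥ (1−γ)⁻¹ mₙ(Ω)^{1−γ}`,
where `μφ⁻(t) = mₙ({x ∈ Ω : φ(x) > t})` and `0^{−γ} = ∞`. -/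
theorem stmt_5 (n : ℕ) (Ω : Set (EuclideanSpace ℝ (Fin n)))
    (hΩo : IsOpen Ω) (hΩb : Bornology.IsBounded Ω)
    (φ : EuclideanSpace ℝ (Fin n) → ℝ≥0∞) (hφ : Measurable φ)
    (γ : ℝ) (hγ0 : 0 < γ) (hγ1 : γ < 1) :
    ENNReal.ofReal (1 / (1 - γ)) * (volume Ω) ^ (1 - γ) ≤
      ∫⁻ x in Ω, (volume {z ∈ Ω | φ x < φ z}) ^ (-γ) ∂volume := by
  have : IsFiniteMeasure (volume.restrict Ω) := isFiniteMeasure_restrict.2 hΩb.measure_lt_top.ne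
  have hsep : ∀ p : EuclideanSpace ℝ (Fin n) → Prop,
      volume {z ∈ Ω | p z} = volume.restrict Ω {z | p z} := fun p => by
    rw [Measure.restrict_apply' hΩo.measurableSet]
    congr 1 with z
    exact and_comm
  simpa only [hsep, Measure.restrict_apply_univ] using
    ofReal_mul_rpow_le_lintegral_measure_lt_rpow_neg (volume.restrict Ω) hφ hγ0.le hγ1
end

section
/- Let Ω ⊂ ℝⁿ be open and bounded with mₙ(Ω) > 0, φ : Ω → [0,∞] measurable, and γ ∈ [1,∞). Then ∫_Ω (μφ⁻(φ(x)))^{−γ} dmₙ(x) = ∞, where μφ⁻(t) = mₙ({x ∈ Ω : φ(x) > t}). -/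
/-!
Let `μ` be Lebesgue measure restricted to `Ω` and `F t = μ {φ > t}`. The function `F ∘ φ` is
stochastically no larger than the uniform law on `[0, μ Ω]`: `μ {F ∘ φ < s} ≥ s` for
`s ≤ μ Ω`, a consequence of the left continuity of `t ↦ μ {φ ≥ t}`. For `s ≤ 1` the integrand
exceeds `1 / s` on `{F ∘ φ < s}`, so each of these sets carries integral at least `1`. Were the
integral finite, the integrand would be finite a.e., so `μ {F ∘ φ = 0} = 0` and the sets
`{F ∘ φ < s}` would shrink to a null set as `s → 0`; absolute continuity of the integral then
contradicts the lower bound `1`.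
-/

open MeasureTheory Metric ENNReal Set Filter Topology

section OrderMeasure

variable {β : Type*} [CompleteLinearOrder β] [TopologicalSpace β] [OrderTopology β]
  [FirstCountableTopology β] [MeasurableSpace β] [OpensMeasurableSpace β]

theorem le_measure_Ici_of_forall_lt_le_measure_Ioi {ρ : Measure β} [IsFiniteMeasure ρ] {a : β}
    {c : ℝ≥0∞} (hc : c ≤ ρ univ) (h : ∀ t < a, c ≤ ρ (Ioi t)) : c ≤ ρ (Ici a) := by
  rcases eq_or_neBot (𝓝[<] a) with ha | ha
  · rcases nhdsLT_eq_bot_iff.mp ha with ha | ⟨b, hba⟩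
    · rwa [ha.Ici_eq]
    · rw [← hba.Ioi_eq]
      exact h b hba.lt
  · obtain ⟨t₀, ht₀⟩ := ha.nonempty_of_mem self_mem_nhdsWithin
    have hlim : Tendsto (fun t => ρ (Ioi t)) (𝓝[<] a) (𝓝 (ρ (⋂ t < a, Ioi t))) :=
      tendsto_measure_biInter_gt (ι := βᵒᵈ) (fun _ _ => measurableSet_Ioi.nullMeasurableSet)
        (fun _ _ _ hst => Ioi_subset_Ioi hst) ⟨t₀, ht₀, measure_ne_top _ _⟩
    have hIci : ⋂ t < a, Ioi t = Ici a := by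
      ext x
      simp [forall_lt_iff_le]
    rw [hIci] at hlim
    exact ge_of_tendsto hlim (eventually_nhdsWithin_of_forall h)

theorem le_measure_setOf_measure_Ioi_lt {ρ : Measure β} [IsFiniteMeasure ρ] {c : ℝ≥0∞}
    (hc : c ≤ ρ univ) : c ≤ ρ {t | ρ (Ioi t) < c} := by
  set A := {t | ρ (Ioi t) < c}
  -- `A` is an upper set, hence `Ici (sInf A)` or `Ioi (sInf A)`.
  have hA : IsUpperSet A := fun t u htu ht => (measure_mono (Ioi_subset_Ioi htu)).trans_lt ht
  by_cases ha : sInf A ∈ A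
  · refine (le_measure_Ici_of_forall_lt_le_measure_Ioi hc fun t ht => ?_).trans
      (measure_mono (hA.Ici_subset ha))
    exact not_lt.1 fun htA => (sInf_le (show t ∈ A from htA)).not_gt ht
  · refine (not_lt.1 ha).trans (measure_mono fun u hu => ?_)
    obtain ⟨t, htA, htu⟩ := sInf_lt_iff.1 hu
    exact hA htu.le htA

variable {α : Type*} [MeasurableSpace α]

theorem le_measure_setOf_measure_preimage_Ioi_lt {μ : Measure α} [IsFiniteMeasure μ]
    {φ : α → β} (hφ : Measurable φ) {c : ℝ≥0∞} (hc : c ≤ μ univ) :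
    c ≤ μ {x | μ (φ ⁻¹' Ioi (φ x)) < c} := by
  have hA : IsUpperSet {t | μ (φ ⁻¹' Ioi t) < c} := fun t u htu ht =>
    (measure_mono (preimage_mono (Ioi_subset_Ioi htu))).trans_lt ht
  have h := le_measure_setOf_measure_Ioi_lt (ρ := μ.map φ) (c := c)
    (by rwa [Measure.map_apply hφ MeasurableSet.univ])
  simp only [Measure.map_apply hφ measurableSet_Ioi] at h
  rwa [Measure.map_apply hφ hA.ordConnected.measurableSet] at h

end OrderMeasure

theorem ENNReal.inv_le_rpow_neg {x : ℝ≥0∞} (hx : x ≤ 1) {γ : ℝ} (hγ : 1 ≤ γ) : x⁻¹ ≤ x ^ (-γ) := by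
  rw [← ENNReal.rpow_neg_one]
  exact ENNReal.rpow_le_rpow_of_exponent_ge hx (neg_le_neg hγ)

section FiniteMeasure

variable {α : Type*} [MeasurableSpace α] {μ : Measure α} [IsFiniteMeasure μ]

theorem tendsto_measure_setOf_lt_nhdsGT_zero {f : α → ℝ≥0∞} (hf : Measurable f) :
    Tendsto (fun s => μ {x | f x < s}) (𝓝[>] 0) (𝓝 (μ {x | f x = 0})) := by
  have hInter : ⋂ s > 0, {x | f x < s} = {x | f x = 0} := by
    ext x
    simp [← nonpos_iff_eq_zero, forall_gt_iff_le]
  rw [← hInter]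
  exact tendsto_measure_biInter_gt (fun _ _ => (hf measurableSet_Iio).nullMeasurableSet)
    (fun _ _ _ hst _ hx => hx.trans_le hst) ⟨1, one_pos, measure_ne_top _ _⟩

theorem lintegral_rpow_neg_eq_top_of_le_measure_setOf_lt {f : α → ℝ≥0∞} (hf : Measurable f)
    {γ : ℝ} (hγ : 1 ≤ γ) {c : ℝ≥0∞} (hc : c ≠ 0) (h : ∀ s ≤ c, s ≤ μ {x | f x < s}) :
    ∫⁻ x, f x ^ (-γ) ∂μ = ∞ := by
  by_contra hI
  have hg : Measurable fun x => f x ^ (-γ) := hf.pow_const _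
  have hzero : μ {x | f x = 0} = 0 :=
    measure_mono_null (fun x (hx : f x = 0) => by simp [hx, show 0 < γ by linarith])
      (measure_eq_top_of_lintegral_ne_top hg.aemeasurable hI)
  have hsmall : Tendsto (fun s => ∫⁻ x in {x | f x < s}, f x ^ (-γ) ∂μ) (𝓝[>] 0) (𝓝 0) := by
    have hμ := tendsto_measure_setOf_lt_nhdsGT_zero (μ := μ) hf
    rw [hzero] at hμ
    exact tendsto_setLIntegral_zero hI hμ
  have hlarge : ∀ᶠ s in 𝓝[>] 0, 1 ≤ ∫⁻ x in {x | f x < s}, f x ^ (-γ) ∂μ := by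
    filter_upwards [Ioc_mem_nhdsGT (lt_min (pos_iff_ne_zero.2 hc) one_pos)] with s ⟨hs0, hs⟩
    have hs1 : s ≤ 1 := hs.trans (min_le_right _ _)
    calc 1 = s⁻¹ * s := (ENNReal.inv_mul_cancel hs0.ne' (hs1.trans_lt one_lt_top).ne).symm
      _ ≤ s⁻¹ * μ {x | f x < s} := by gcongr; exact h s (hs.trans (min_le_left _ _))
      _ = ∫⁻ x in {x | f x < s}, s⁻¹ ∂μ := by rw [setLIntegral_const]
      _ ≤ ∫⁻ x in {x | f x < s}, f x ^ (-γ) ∂μ := setLIntegral_mono hg fun x (hx : f x < s) =>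
          (ENNReal.inv_le_inv.2 hx.le).trans (ENNReal.inv_le_rpow_neg (hx.le.trans hs1) hγ)
  exact absurd (ge_of_tendsto hsmall hlarge) (by simp)

end FiniteMeasure

theorem stmt_6_general (n : ℕ) (Ω : Set (EuclideanSpace ℝ (Fin n)))
    (hΩb : Bornology.IsBounded Ω) (hΩpos : 0 < volume Ω)
    (φ : EuclideanSpace ℝ (Fin n) → ℝ≥0∞) (hφ : Measurable φ)
    (γ : ℝ) (hγ : 1 ≤ γ) :
    ∫⁻ x in Ω, (volume {z ∈ Ω | φ x < φ z}) ^ (-γ) ∂volume = ⊤ := by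
  have : IsFiniteMeasure (volume.restrict Ω) := isFiniteMeasure_restrict.2 hΩb.measure_lt_top.ne
  have hsurvival : ∀ x, volume {z ∈ Ω | φ x < φ z} = volume.restrict Ω (φ ⁻¹' Ioi (φ x)) :=
    fun x => by rw [Measure.restrict_apply (hφ measurableSet_Ioi), inter_comm]; rfl
  have hmeas : Measurable fun x => volume.restrict Ω (φ ⁻¹' Ioi (φ x)) :=
    (Antitone.measurable fun _ _ hst => measure_mono (preimage_mono (Ioi_subset_Ioi hst))).comp hφ
  simp only [hsurvival]
  exact lintegral_rpow_neg_eq_top_of_le_measure_setOf_lt hmeas hγ hΩpos.ne' fun s hs =>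
    le_measure_setOf_measure_preimage_Ioi_lt hφ (by rwa [Measure.restrict_apply_univ])

/-- For `γ ∈ [1,∞)` and `mₙ(Ω) > 0`:  `∫_Ω (μφ⁻ ∘ φ)^{−γ} = ∞`,
where `μφ⁻(t) = mₙ({x ∈ Ω : φ(x) > t})` and `0^{−γ} = ∞`. -/
theorem stmt_6 (n : ℕ) (Ω : Set (EuclideanSpace ℝ (Fin n)))
    (hΩo : IsOpen Ω) (hΩb : Bornology.IsBounded Ω) (hΩpos : 0 < volume Ω)
    (φ : EuclideanSpace ℝ (Fin n) → ℝ≥0∞) (hφ : Measurable φ)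
    (γ : ℝ) (hγ : 1 ≤ γ) :
    ∫⁻ x in Ω, (volume {z ∈ Ω | φ x < φ z}) ^ (-γ) ∂volume = ⊤ :=
  stmt_6_general n Ω hΩb hΩpos φ hφ γ hγ
end

section
/- Let Ω ⊂ ℝⁿ be open and bounded, φ : Ω → [0,∞] measurable, and r ∈ (0,∞). Then ∫_Ω (μφ⁻(φ(x)))^r dmₙ(x) ≤ (1+r)^{−1}[mₙ(Ω)]^{1+r} ≤ ∫_Ω (μφ⁺(φ(x)))^r dmₙ(x), where μφ⁺(t) = mₙ({x ∈ Ω : φ(x) ≥ t}) and μφ⁻(t) = mₙ({x ∈ Ω : φ(x) > t}). -/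
open MeasureTheory ENNReal Set

/-!
Write `F⁻ x = μ {z | φ x < φ z}` and `F⁺ x = μ {z | φ x ≤ φ z}` with `μ = mₙ|Ω` and
`M = μ univ`. Their tails satisfy `μ {F⁻ > t} ≤ M - t ≤ μ {F⁺ > t}`: this is the
inequality `μ {F⁺ ≤ t} ≤ t` of the probability integral transform (and its order dual
for `F⁻`), proved by exhausting the upper set `{s | μ {φ ≥ s} ≤ t}` by countably many
principal ones. So `F⁻` and `F⁺` are dominated by, resp. dominate, the ramp `s ↦ s` on
`(0, M]` in distribution, and the layer cake formula turns this into the comparison of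
`r`-th moments with `∫₀ᴹ s ^ r ds = M ^ (1 + r) / (1 + r)`.
-/

section TailInequalities

variable {α β : Type*} [MeasurableSpace α] {μ : Measure α}
  [CompleteLinearOrder β] [TopologicalSpace β] [OrderTopology β] [FirstCountableTopology β]

theorem measure_setOf_tail_le_le (φ : α → β) (t : ℝ≥0∞) :
    μ {x | μ {z | φ x ≤ φ z} ≤ t} ≤ t := by
  set U : Set β := {s | μ {z | s ≤ φ z} ≤ t}
  change μ (φ ⁻¹' U) ≤ t
  rcases U.eq_empty_or_nonempty with hempty | hne
  · simp [hempty]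
  by_cases hmem : sInf U ∈ U
  · calc μ (φ ⁻¹' U) ≤ μ {z | sInf U ≤ φ z} := measure_mono fun x hx => sInf_le hx
      _ ≤ t := hmem
  obtain ⟨u, hu_anti, -, hu_lim, hu_mem⟩ := (isGLB_sInf U).exists_seq_antitone_tendsto hne
  have hcover : φ ⁻¹' U ⊆ ⋃ n, {z | u n ≤ φ z} := fun x (hx : φ x ∈ U) => by
    have hlt : sInf U < φ x := (sInf_le hx).lt_of_ne fun h => hmem (h ▸ hx)
    obtain ⟨n, hn⟩ := (hu_lim.eventually (gt_mem_nhds hlt)).exists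
    exact mem_iUnion.mpr ⟨n, hn.le⟩
  calc μ (φ ⁻¹' U) ≤ μ (⋃ n, {z | u n ≤ φ z}) := measure_mono hcover
    _ = ⨆ n, μ {z | u n ≤ φ z} :=
      Monotone.measure_iUnion fun m n hmn z hz => (hu_anti hmn).trans hz
    _ ≤ t := iSup_le hu_mem

theorem sub_le_measure_setOf_lt_tail (φ : α → β) (t : ℝ≥0∞) :
    μ univ - t ≤ μ {x | t < μ {z | φ x ≤ φ z}} := by
  set A := {x | μ {z | φ x ≤ φ z} ≤ t}
  rw [tsub_le_iff_left]
  calc μ univ ≤ μ A + μ Aᶜ := measure_univ_le_add_compl A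
    _ ≤ t + μ {x | t < μ {z | φ x ≤ φ z}} := by
        gcongr
        · exact measure_setOf_tail_le_le φ t
        · exact fun x (hx : ¬ _ ≤ t) => not_le.mp hx

variable [MeasurableSpace β] [OpensMeasurableSpace β]

theorem measure_setOf_lt_strictTail_le_sub {φ : α → β} (hφ : Measurable φ) (t : ℝ≥0∞) :
    μ {x | t < μ {z | φ x < φ z}} ≤ μ univ - t := by
  -- `measure_setOf_tail_le_le` in the order dual bounds `μ {x | μ {φ ≤ φ x} ≤ μ univ - t}`.
  refine le_trans (measure_mono fun x (hx : t < _) => ?_)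
    (measure_setOf_tail_le_le (β := βᵒᵈ) (μ := μ) (OrderDual.toDual ∘ φ) (μ univ - t))
  have hsplit := measure_add_measure_compl (μ := μ)
    (show MeasurableSet {z | φ x < φ z} from hφ measurableSet_Ioi)
  rw [show {z | φ x < φ z}ᶜ = {z | φ z ≤ φ x} by ext; simp] at hsplit
  refine ENNReal.le_sub_of_add_le_right hx.ne_top ?_
  calc μ {z | φ z ≤ φ x} + t ≤ μ {z | φ z ≤ φ x} + μ {z | φ x < φ z} := by gcongr
    _ = μ univ := by rw [add_comm, hsplit]

end TailInequalities

section Comparison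

variable {α β : Type*} [MeasurableSpace α] [MeasurableSpace β]
  {μ : Measure α} {ν : Measure β}

theorem lintegral_rpow_le_of_measure_lt_le {F : α → ℝ≥0∞} {G : β → ℝ≥0∞}
    (hF : AEMeasurable F μ) (hG : AEMeasurable G ν) (hF_top : ∀ x, F x ≠ ∞)
    (hG_top : ∀ y, G y ≠ ∞) {p : ℝ} (hp : 0 < p)
    (h : ∀ t, μ {x | t < F x} ≤ ν {y | t < G y}) :
    ∫⁻ x, F x ^ p ∂μ ≤ ∫⁻ y, G y ^ p ∂ν := by
  have hrpow {a : ℝ≥0∞} (ha : a ≠ ∞) : a ^ p = ENNReal.ofReal (a.toReal ^ p) := by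
    rw [← ofReal_rpow_of_nonneg toReal_nonneg hp.le, ofReal_toReal ha]
  simp_rw [hrpow (hF_top _), hrpow (hG_top _)]
  rw [lintegral_rpow_eq_lintegral_meas_lt_mul μ (.of_forall fun _ => toReal_nonneg)
      hF.ennreal_toReal hp,
    lintegral_rpow_eq_lintegral_meas_lt_mul ν (.of_forall fun _ => toReal_nonneg)
      hG.ennreal_toReal hp]
  refine mul_le_mul_right (setLIntegral_mono' measurableSet_Ioi fun t ht => ?_) _
  simp only [← ofReal_lt_iff_lt_toReal (le_of_lt ht) (hF_top _),
    ← ofReal_lt_iff_lt_toReal (le_of_lt ht) (hG_top _)]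
  exact mul_le_mul_left (h _) _

end Comparison

theorem volume_restrict_Ioc_setOf_lt_ofReal (a : ℝ) (t : ℝ≥0∞) :
    volume.restrict (Ioc 0 a) {s | t < ENNReal.ofReal s} = ENNReal.ofReal a - t := by
  induction t using ENNReal.recTopCoe with
  | top => simp
  | coe q =>
    simp_rw [coe_lt_ofReal]
    change volume.restrict (Ioc 0 a) (Ioi (q : ℝ)) = _
    rw [Measure.restrict_apply measurableSet_Ioi, inter_comm, Ioc_inter_Ioi,
      sup_of_le_right q.coe_nonneg, Real.volume_Ioc, ofReal_sub _ q.coe_nonneg,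
      ofReal_coe_nnreal]

theorem lintegral_Ioc_ofReal_rpow {a p : ℝ} (ha : 0 ≤ a) (hp : -1 < p) :
    ∫⁻ s in Ioc 0 a, ENNReal.ofReal s ^ p =
      ENNReal.ofReal (1 / (1 + p)) * ENNReal.ofReal a ^ (1 + p) := by
  rw [setLIntegral_congr_fun measurableSet_Ioc fun s hs => ofReal_rpow_of_pos hs.1,
    ← ofReal_integral_eq_lintegral_ofReal, ← intervalIntegral.integral_of_le ha,
    integral_rpow (Or.inl hp), Real.zero_rpow (by linarith), sub_zero,
    ofReal_rpow_of_nonneg ha (by linarith), ← ofReal_mul (one_div_nonneg.mpr (by linarith)),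
    add_comm p 1, one_div_mul_eq_div]
  · exact (intervalIntegral.intervalIntegrable_rpow' hp).1
  · filter_upwards [self_mem_ae_restrict measurableSet_Ioc] with s hs
    exact Real.rpow_nonneg hs.1.le p

section Moments

variable {α : Type*} [MeasurableSpace α] {μ : Measure α} [IsFiniteMeasure μ]
  {F : α → ℝ≥0∞} {p : ℝ}

theorem lintegral_rpow_le_of_measure_lt_le_sub (hF : AEMeasurable F μ)
    (hF_top : ∀ x, F x ≠ ∞) (hp : 0 < p) (h : ∀ t, μ {x | t < F x} ≤ μ univ - t) :
    ∫⁻ x, F x ^ p ∂μ ≤ ENNReal.ofReal (1 / (1 + p)) * μ univ ^ (1 + p) := by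
  have hM := ofReal_toReal (measure_ne_top μ univ)
  calc ∫⁻ x, F x ^ p ∂μ ≤ ∫⁻ s in Ioc 0 (μ univ).toReal, ENNReal.ofReal s ^ p :=
        lintegral_rpow_le_of_measure_lt_le hF measurable_ofReal.aemeasurable hF_top
          (fun _ => ofReal_ne_top) hp fun t => by
            rw [volume_restrict_Ioc_setOf_lt_ofReal, hM]; exact h t
    _ = ENNReal.ofReal (1 / (1 + p)) * μ univ ^ (1 + p) := by
        rw [lintegral_Ioc_ofReal_rpow toReal_nonneg (by linarith), hM]

theorem le_lintegral_rpow_of_sub_le_measure_lt (hF : AEMeasurable F μ)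
    (hF_top : ∀ x, F x ≠ ∞) (hp : 0 < p) (h : ∀ t, μ univ - t ≤ μ {x | t < F x}) :
    ENNReal.ofReal (1 / (1 + p)) * μ univ ^ (1 + p) ≤ ∫⁻ x, F x ^ p ∂μ := by
  have hM := ofReal_toReal (measure_ne_top μ univ)
  calc ENNReal.ofReal (1 / (1 + p)) * μ univ ^ (1 + p)
      = ∫⁻ s in Ioc 0 (μ univ).toReal, ENNReal.ofReal s ^ p := by
        rw [lintegral_Ioc_ofReal_rpow toReal_nonneg (by linarith), hM]
    _ ≤ ∫⁻ x, F x ^ p ∂μ :=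
        lintegral_rpow_le_of_measure_lt_le measurable_ofReal.aemeasurable hF
          (fun _ => ofReal_ne_top) hF_top hp fun t => by
            rw [volume_restrict_Ioc_setOf_lt_ofReal, hM]; exact h t

end Moments

theorem stmt_7_general (n : ℕ) (Ω : Set (EuclideanSpace ℝ (Fin n)))
    (hΩb : Bornology.IsBounded Ω)
    (φ : EuclideanSpace ℝ (Fin n) → ℝ≥0∞) (hφ : Measurable φ)
    (r : ℝ) (hr : 0 < r) :
    (∫⁻ x in Ω, (volume {z ∈ Ω | φ x < φ z}) ^ r ∂volume ≤
        ENNReal.ofReal (1 / (1 + r)) * (volume Ω) ^ (1 + r)) ∧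
      ENNReal.ofReal (1 / (1 + r)) * (volume Ω) ^ (1 + r) ≤
        ∫⁻ x in Ω, (volume {z ∈ Ω | φ x ≤ φ z}) ^ r ∂volume := by
  set μ := volume.restrict Ω
  have : IsFiniteMeasure μ := isFiniteMeasure_restrict.mpr hΩb.measure_lt_top.ne
  have hlt x : volume {z ∈ Ω | φ x < φ z} = μ {z | φ x < φ z} := by
    rw [← inter_ofPred_eq_sep, inter_comm]
    exact (Measure.restrict_apply (hφ measurableSet_Ioi)).symm
  have hle x : volume {z ∈ Ω | φ x ≤ φ z} = μ {z | φ x ≤ φ z} := by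
    rw [← inter_ofPred_eq_sep, inter_comm]
    exact (Measure.restrict_apply (hφ measurableSet_Ici)).symm
  have hanti_lt : Antitone fun s => μ {z | s < φ z} := fun s s' hs =>
    measure_mono fun z hz => hs.trans_lt hz
  have hanti_le : Antitone fun s => μ {z | s ≤ φ z} := fun s s' hs =>
    measure_mono fun z hz => hs.trans hz
  simp_rw [hlt, hle, ← Measure.restrict_apply_univ Ω]
  exact ⟨lintegral_rpow_le_of_measure_lt_le_sub (hanti_lt.measurable.comp hφ).aemeasurable
      (fun _ => measure_ne_top μ _) hr (measure_setOf_lt_strictTail_le_sub hφ),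
    le_lintegral_rpow_of_sub_le_measure_lt (hanti_le.measurable.comp hφ).aemeasurable
      (fun _ => measure_ne_top μ _) hr (sub_le_measure_setOf_lt_tail φ)⟩

/-- For `r ∈ (0,∞)`:
`∫_Ω (μφ⁻ ∘ φ)^r ≤ (1+r)⁻¹ mₙ(Ω)^{1+r} ≤ ∫_Ω (μφ⁺ ∘ φ)^r`. -/
theorem stmt_7 (n : ℕ) (Ω : Set (EuclideanSpace ℝ (Fin n)))
    (hΩo : IsOpen Ω) (hΩb : Bornology.IsBounded Ω)
    (φ : EuclideanSpace ℝ (Fin n) → ℝ≥0∞) (hφ : Measurable φ)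
    (r : ℝ) (hr : 0 < r) :
    (∫⁻ x in Ω, (volume {z ∈ Ω | φ x < φ z}) ^ r ∂volume ≤
        ENNReal.ofReal (1 / (1 + r)) * (volume Ω) ^ (1 + r)) ∧
      ENNReal.ofReal (1 / (1 + r)) * (volume Ω) ^ (1 + r) ≤
        ∫⁻ x in Ω, (volume {z ∈ Ω | φ x ≤ φ z}) ^ r ∂volume :=
  stmt_7_general n Ω hΩb φ hφ r hr
end
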